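/- arXiv:2302.01625 — 2 statements merged into one kernel-verified Lean document; each statement's English description precedes it below -/
import Mathlib

section
/- Under the stated drift hypotheses, for all m, n ∈ ℕ and every M ∈ ℝ, almost surely P(X_{m+n} ≥ M | 𝓕_m) ≤ ρ^n e^{η(X_m − M)} + ((1 − ρ^n)/(1 − ρ)) · D e^{η(K − M)}. -/
/-!
Put `Y n = exp (η * X n)`. For `|x| ≤ a` the exponential series gives
`exp x ≤ 1 + x + (x / a) ^ 2 * (exp a - 1 - a)`, so on `{K ≤ X n}` the drift yields
`E[Y (n+1) | ℱ n] ≤ (1 - η ε + η² c) Y n ≤ ρ Y n`, while on `{X n < K}` bounded increments give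
`E[Y (n+1) | ℱ n] ≤ exp (η k) Y n ≤ D exp (η K)`. Iterating
`E[Y (n+1) | ℱ n] ≤ ρ Y n + D exp (η K)` along the tower property and applying the conditional
Markov inequality `1{M ≤ X} ≤ exp (η (X - M))` gives the bound.
-/

open MeasureTheory Filter
open scoped Nat

namespace Real

lemma hasSum_exp_sub_one_sub (x : ℝ) :
    HasSum (fun n : ℕ => x ^ (n + 2) / (n + 2)!) (exp x - 1 - x) := by
  have h := (hasSum_nat_add_iff' 2).2 (NormedSpace.expSeries_div_hasSum_exp x)
  simpa [← exp_eq_exp_ℝ, Finset.sum_range_succ, sub_sub] using h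

lemma exp_sub_one_sub_le_of_abs_le {a x : ℝ} (ha : 0 < a) (hx : |x| ≤ a) :
    exp x - 1 - x ≤ (x / a) ^ 2 * (exp a - 1 - a) := by
  refine hasSum_le (fun n => ?_) (hasSum_exp_sub_one_sub x)
    ((hasSum_exp_sub_one_sub a).mul_left _)
  have hpow : x ^ (n + 2) ≤ (x / a) ^ 2 * a ^ (n + 2) :=
    calc x ^ (n + 2) = x ^ 2 * x ^ n := by ring
      _ ≤ x ^ 2 * |x| ^ n :=
        mul_le_mul_of_nonneg_left ((le_abs_self _).trans_eq (abs_pow x n)) (sq_nonneg x)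
      _ ≤ x ^ 2 * a ^ n := by gcongr
      _ = (x / a) ^ 2 * a ^ (n + 2) := by field_simp; ring
  rw [← mul_div_assoc]
  gcongr

lemma exp_mul_le_one_add_mul_add_sq_mul {lam k η d : ℝ} (hlam : 0 < lam) (hk : 0 < k)
    (hη0 : 0 ≤ η) (hηlam : η ≤ lam) (hd : |d| ≤ k) :
    exp (η * d) ≤ 1 + η * d + η ^ 2 * ((exp (lam * k) - 1 - lam * k) / lam ^ 2) := by
  have hE : 0 ≤ (exp (lam * k) - 1 - lam * k) / lam ^ 2 := by
    have := add_one_le_exp (lam * k)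
    exact div_nonneg (by linarith) (sq_nonneg lam)
  have hηd : |η * d| ≤ lam * k := by
    rw [abs_mul, abs_of_nonneg hη0]
    exact mul_le_mul hηlam hd (abs_nonneg d) hlam.le
  have hdk : (d / k) ^ 2 ≤ 1 := by
    rw [sq_le_one_iff_abs_le_one, abs_div, abs_of_pos hk]
    exact div_le_one_of_le₀ hd hk.le
  calc exp (η * d)
      ≤ 1 + η * d + (η * d / (lam * k)) ^ 2 * (exp (lam * k) - 1 - lam * k) := by
        linarith [exp_sub_one_sub_le_of_abs_le (mul_pos hlam hk) hηd]
    _ = 1 + η * d + (d / k) ^ 2 * (η ^ 2 * ((exp (lam * k) - 1 - lam * k) / lam ^ 2)) := by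
        field_simp
    _ ≤ 1 + η * d + η ^ 2 * ((exp (lam * k) - 1 - lam * k) / lam ^ 2) := by
        nlinarith [mul_nonneg (sq_nonneg η) hE]

lemma sq_div_two_le_exp_mul_sub_one_sub_div_sq {lam k : ℝ} (hlam : 0 < lam) (hk : 0 ≤ k) :
    k ^ 2 / 2 ≤ (exp (lam * k) - 1 - lam * k) / lam ^ 2 := by
  rw [le_div_iff₀ (by positivity)]
  nlinarith [quadratic_le_exp_of_nonneg (mul_nonneg hlam.le hk)]

end Real

open Real

section Conditioning

variable {Ω : Type*} {m m0 : MeasurableSpace Ω} {μ : Measure Ω} [IsFiniteMeasure μ]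

lemma condExp_const_add_const_mul (hm : m ≤ m0) (a b : ℝ) {f : Ω → ℝ} (hf : Integrable f μ) :
    μ[fun ω => a + b * f ω | m] =ᵐ[μ] fun ω => a + b * μ[f | m] ω := by
  have hadd := condExp_add (integrable_const a) (hf.const_mul b) m
  rw [condExp_const hm] at hadd
  filter_upwards [hadd, condExp_smul (μ := μ) b f m] with ω h_add h_smul
  simp only [Pi.add_apply, Pi.smul_apply, smul_eq_mul] at h_add h_smul
  rw [← h_smul]
  exact h_add

lemma condExp_indicator_le_exp_mul {f : Ω → ℝ} (hf : Measurable f) {η : ℝ}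
    (hη : 0 ≤ η) (M : ℝ) (hint : Integrable (fun ω => exp (η * f ω)) μ) :
    μ[{ω | M ≤ f ω}.indicator (fun _ => (1 : ℝ)) | m] ≤ᵐ[μ]
      fun ω => exp (-(η * M)) * μ[fun ω => exp (η * f ω) | m] ω := by
  have hle : {ω | M ≤ f ω}.indicator (fun _ => (1 : ℝ)) ≤ᵐ[μ]
      fun ω => exp (-(η * M)) * exp (η * f ω) := by
    refine Eventually.of_forall fun ω => ?_
    dsimp only
    rw [← exp_add]
    rw [Set.indicator_apply]
    split_ifs with hω
    · exact one_le_exp (by nlinarith [Set.mem_ofPred.1 hω])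
    · exact (exp_pos _).le
  have hmono := condExp_mono (m := m)
    ((integrable_const 1).indicator (measurableSet_le measurable_const hf))
    (hint.const_mul _) hle
  filter_upwards [hmono, condExp_smul (μ := μ) (exp (-(η * M))) (fun ω => exp (η * f ω)) m]
    with ω h_mono h_smul
  exact h_mono.trans_eq h_smul

lemma condExp_exp_mul_le_of_drift (hm : m ≤ m0) {X X' : Ω → ℝ} {η k q ε K ρ D : ℝ}
    (hη : 0 ≤ η) (hρ0 : 0 ≤ ρ) (hρ : 1 + q - η * ε ≤ ρ) (hD : exp (η * k) ≤ D)
    (hX : Measurable[m] X) (hX' : Measurable X')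
    (hint : Integrable (fun ω => exp (η * X' ω)) μ)
    (hbdd : ∀ᵐ ω ∂μ, |X' ω - X ω| ≤ k)
    (hquad : ∀ d, |d| ≤ k → exp (η * d) ≤ 1 + η * d + q)
    (hdrift : ∀ᵐ ω ∂μ, K ≤ X ω → μ[fun ω' => X' ω' - X ω' | m] ω ≤ -ε) :
    μ[fun ω => exp (η * X' ω) | m] ≤ᵐ[μ] fun ω => ρ * exp (η * X ω) + D * exp (η * K) := by
  set Δ : Ω → ℝ := fun ω => X' ω - X ω
  set Z : Ω → ℝ := fun ω => exp (η * Δ ω)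
  have hΔm : Measurable Δ := hX'.sub (hX.mono hm le_rfl)
  have hZD : ∀ᵐ ω ∂μ, Z ω ≤ D := by
    filter_upwards [hbdd] with ω hω
    exact (exp_le_exp.2 (mul_le_mul_of_nonneg_left ((le_abs_self _).trans hω) hη)).trans hD
  have hΔint : Integrable Δ μ :=
    .of_bound hΔm.aestronglyMeasurable k (by simpa only [Real.norm_eq_abs] using hbdd)
  have hZint : Integrable Z μ :=
    .of_bound (hΔm.const_mul η).exp.aestronglyMeasurable D
      (by filter_upwards [hZD] with ω hω; rwa [Real.norm_of_nonneg (exp_pos _).le])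
  have hsplit : (fun ω => exp (η * X' ω)) = (fun ω => exp (η * X ω)) * Z := by
    ext ω
    simp only [Pi.mul_apply, Z, Δ, ← exp_add]
    ring_nf
  have hpull : μ[fun ω => exp (η * X' ω) | m] =ᵐ[μ] fun ω => exp (η * X ω) * μ[Z | m] ω := by
    rw [hsplit] at hint ⊢
    exact condExp_mul_of_stronglyMeasurable_left (hX.const_mul η).exp.stronglyMeasurable hint hZint
  have hcondZD : μ[Z | m] ≤ᵐ[μ] fun _ => D := by
    simpa only [condExp_const hm] using condExp_mono (m := m) hZint (integrable_const D) hZD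
  have hcondZ_nonneg : 0 ≤ᵐ[μ] μ[Z | m] :=
    condExp_nonneg (Eventually.of_forall fun ω => (exp_pos _).le)
  have hcondZ_drift : μ[Z | m] ≤ᵐ[μ] fun ω => 1 + q + η * μ[Δ | m] ω := by
    have hmono := condExp_mono (m := m) hZint ((integrable_const (1 + q)).add (hΔint.const_mul η))
      (show Z ≤ᵐ[μ] fun ω => 1 + q + η * Δ ω by
        filter_upwards [hbdd] with ω hω
        linarith [hquad _ hω])
    filter_upwards [hmono, condExp_const_add_const_mul hm (1 + q) η hΔint] with ω h1 h2
    exact h1.trans_eq h2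
  filter_upwards [hpull, hcondZD, hcondZ_nonneg, hcondZ_drift, hdrift]
    with ω h_pull h_D h_nonneg h_drift h_drift_cond
  rw [h_pull]
  have hDK : 0 ≤ D * exp (η * K) := mul_nonneg ((exp_pos _).le.trans hD) (exp_pos _).le
  rcases le_or_gt K (X ω) with hK | hK
  · have hZρ : μ[Z | m] ω ≤ ρ := by
      nlinarith [mul_le_mul_of_nonneg_left (h_drift_cond hK) hη]
    nlinarith [mul_le_mul_of_nonneg_left hZρ (exp_pos (η * X ω)).le]
  · have hXK : exp (η * X ω) ≤ exp (η * K) := exp_le_exp.2 (by nlinarith)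
    nlinarith [mul_le_mul hXK h_D h_nonneg (exp_pos _).le, mul_nonneg hρ0 (exp_pos (η * X ω)).le]

end Conditioning

section Processes

variable {Ω : Type*} {m0 : MeasurableSpace Ω} {μ : Measure Ω}

lemma condExp_le_geom_sum_of_condExp_succ_le [IsFiniteMeasure μ] {ℱ : Filtration ℕ m0}
    {Y : ℕ → Ω → ℝ} (hY : Adapted ℱ Y) (hint : ∀ n, Integrable (Y n) μ) {ρ b : ℝ} (hρ : 0 ≤ ρ)
    (hstep : ∀ n, μ[Y (n + 1) | ℱ n] ≤ᵐ[μ] fun ω => ρ * Y n ω + b) (m n : ℕ) :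
    μ[Y (m + n) | ℱ m] ≤ᵐ[μ]
      fun ω => ρ ^ n * Y m ω + (∑ i ∈ Finset.range n, ρ ^ i) * b := by
  induction n with
  | zero =>
    rw [Nat.add_zero, condExp_of_stronglyMeasurable (ℱ.le m) (hY m).stronglyMeasurable (hint m)]
    exact Eventually.of_forall fun ω => by simp
  | succ n ih =>
    have htower : μ[μ[Y (m + n + 1) | ℱ (m + n)] | ℱ m] =ᵐ[μ] μ[Y (m + n + 1) | ℱ m] :=
      condExp_condExp_of_le (ℱ.mono (Nat.le_add_right m n)) (ℱ.le (m + n))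
    have hmono : μ[μ[Y (m + n + 1) | ℱ (m + n)] | ℱ m] ≤ᵐ[μ]
        μ[fun ω => b + ρ * Y (m + n) ω | ℱ m] :=
      condExp_mono integrable_condExp ((integrable_const b).add ((hint _).const_mul ρ))
        ((hstep (m + n)).mono fun ω h => h.trans_eq (add_comm _ _))
    filter_upwards [htower, hmono, condExp_const_add_const_mul (ℱ.le m) b ρ (hint (m + n)), ih]
      with ω h_tower h_mono h_affine h_ih
    rw [← add_assoc, ← h_tower, geom_sum_succ]
    calc _ ≤ b + ρ * μ[Y (m + n) | ℱ m] ω := h_mono.trans_eq h_affine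
      _ ≤ b + ρ * (ρ ^ n * Y m ω + (∑ i ∈ Finset.range n, ρ ^ i) * b) := by gcongr
      _ = _ := by ring

lemma ae_abs_sub_zero_le_of_abs_succ_sub_le {X : ℕ → Ω → ℝ} {k : ℝ}
    (hbdd : ∀ n, ∀ᵐ ω ∂μ, |X (n + 1) ω - X n ω| ≤ k) (n : ℕ) :
    ∀ᵐ ω ∂μ, |X n ω - X 0 ω| ≤ n * k := by
  induction n with
  | zero => simp
  | succ n ih =>
    filter_upwards [ih, hbdd n] with ω h_ih h_step
    push_cast
    linarith [abs_sub_le (X (n + 1) ω) (X n ω) (X 0 ω)]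

lemma integrable_exp_mul_of_abs_succ_sub_le [IsFiniteMeasure μ] {X : ℕ → Ω → ℝ} {k : ℝ}
    (hX : ∀ n, Measurable (X n))
    {x0 : ℝ} (hX0 : ∀ᵐ ω ∂μ, X 0 ω = x0) (hbdd : ∀ n, ∀ᵐ ω ∂μ, |X (n + 1) ω - X n ω| ≤ k)
    (η : ℝ) (n : ℕ) :
    Integrable (fun ω => exp (η * X n ω)) μ := by
  refine .of_bound ((hX n).const_mul η).exp.aestronglyMeasurable (exp (|η| * (|x0| + n * k))) ?_
  filter_upwards [hX0, ae_abs_sub_zero_le_of_abs_succ_sub_le hbdd n] with ω h0 hn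
  rw [Real.norm_of_nonneg (exp_pos _).le, exp_le_exp]
  have hXn : |X n ω| ≤ |x0| + n * k := by
    rw [h0] at hn
    linarith [abs_sub_abs_le_abs_sub (X n ω) x0]
  calc η * X n ω ≤ |η| * |X n ω| := (le_abs_self _).trans_eq (abs_mul _ _)
    _ ≤ |η| * (|x0| + n * k) := by gcongr

end Processes

theorem stmt_3
    {Ω : Type*} {m0 : MeasurableSpace Ω} {μ : Measure Ω} [IsProbabilityMeasure μ]
    (ℱ : Filtration ℕ m0) (X : ℕ → Ω → ℝ) (hadp : Adapted ℱ X)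
    (x0 : ℝ) (hX0 : ∀ᵐ ω ∂μ, X 0 ω = x0)
    (k ε K : ℝ) (hk : 0 < k) (hε0 : 0 < ε) (hεk : ε ≤ k)
    (hbdd : ∀ n : ℕ, ∀ᵐ ω ∂μ, |X (n + 1) ω - X n ω| ≤ k)
    (hdrift : ∀ n : ℕ, ∀ᵐ ω ∂μ, K ≤ X n ω →
      (μ[(fun ω' => X (n + 1) ω' - X n ω') | ℱ n]) ω ≤ -ε)
    (lam : ℝ) (hlam : 0 < lam)
    (c η ρ D : ℝ)
    (hc : c = (Real.exp (lam * k) - 1 - lam * k) / lam ^ 2)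
    (hη0 : 0 < η) (hηlt : η < min lam (ε / (2 * c)))
    (hρ : ρ = 1 - η * ε / 2)
    (hD : D = Real.exp (lam * k)) :
    ∀ m n : ℕ, ∀ M : ℝ, ∀ᵐ ω ∂μ,
      (μ[Set.indicator {ω' | M ≤ X (m + n) ω'} (fun _ => (1 : ℝ)) | ℱ m]) ω ≤
        ρ ^ n * Real.exp (η * (X m ω - M)) + ((1 - ρ ^ n) / (1 - ρ)) * (D * Real.exp (η * (K - M))) := by
  intro m n M
  obtain ⟨hηlam, hηεc⟩ := lt_min_iff.1 hηlt
  have hc2 : k ^ 2 / 2 ≤ c := hc ▸ sq_div_two_le_exp_mul_sub_one_sub_div_sq hlam hk.le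
  have hηc : η * c < ε / 2 := by
    rw [lt_div_iff₀ (by nlinarith [sq_pos_of_pos hk])] at hηεc
    linarith
  -- `η ε / 2 < ε² / (4 c) ≤ ε² / (2 k²) ≤ 1 / 2`
  have hρ0 : 0 ≤ ρ := by
    rw [hρ]
    nlinarith [mul_le_mul_of_nonneg_left hc2 (mul_pos hη0 hε0).le,
      mul_lt_mul_of_pos_left hηc hε0, mul_le_mul hεk hεk hε0.le hk.le]
  have hρ1 : ρ ≠ 1 := by rw [hρ]; nlinarith [mul_pos hη0 hε0]
  have hXm : ∀ n, Measurable (X n) := fun n => (hadp n).mono (ℱ.le n) le_rfl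
  have hint := integrable_exp_mul_of_abs_succ_sub_le hXm hX0 hbdd η
  have hstep : ∀ n, μ[fun ω => exp (η * X (n + 1) ω) | ℱ n] ≤ᵐ[μ]
      fun ω => ρ * exp (η * X n ω) + D * exp (η * K) := fun n =>
    condExp_exp_mul_le_of_drift (ℱ.le n) hη0.le hρ0
      (by rw [hρ]; nlinarith [mul_lt_mul_of_pos_left hηc hη0])
      (by rw [hD]; gcongr) (hadp n) (hXm (n + 1)) (hint (n + 1)) (hbdd n)
      (fun d hd => hc ▸ exp_mul_le_one_add_mul_add_sq_mul hlam hk hη0.le hηlam.le hd) (hdrift n)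
  filter_upwards [condExp_indicator_le_exp_mul (m := ℱ m) (hXm (m + n)) hη0.le M (hint (m + n)),
    condExp_le_geom_sum_of_condExp_succ_le (Y := fun n ω => exp (η * X n ω))
      (fun n => (hadp n).const_mul η |>.exp) hint hρ0 hstep m n] with ω h_markov h_iter
  calc _ ≤ exp (-(η * M)) * μ[fun ω => exp (η * X (m + n) ω) | ℱ m] ω := h_markov
    _ ≤ exp (-(η * M)) * (ρ ^ n * exp (η * X m ω)
          + (∑ i ∈ Finset.range n, ρ ^ i) * (D * exp (η * K))) := by gcongr
    _ = _ := by
      rw [geom_sum_eq hρ1, ← neg_div_neg_eq, neg_sub, neg_sub, exp_neg, mul_sub, mul_sub,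
        exp_sub, exp_sub]
      ring
end

section
/- Under the stated drift hypotheses, for every m ∈ ℕ the return time τ_{K,m} is almost surely finite, and it has some exponential moments: for every s with 1 < s < ρ^{-1}, E[s^{τ_{K,m}}] ≤ e^{η(x_0 + mk − K)} · (s − 1)/(1 − ρ s) + 1 < ∞. -/
/-!
Exponential Lyapunov argument. Bounded increments give `exp (η Δ) ≤ 1 + η Δ + η² c` for every
increment `Δ`, so above `K` the negative drift yields `E[exp (η Δₙ) | ℱₙ] ≤ 1 + η² c - η ε ≤ ρ`.
Hence `exp (η (X_{m+n} - K))`, killed at the first return to `(-∞, K]`, has expectation at most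
`exp (η (x₀ + m k - K)) ρⁿ`; as this exponential is `≥ 1` above `K`, the same bound holds for
`P(τ > n)`. Geometric tails give `τ < ∞` a.s., and summing `s^τ = 1 + (s - 1) ∑_{i < τ} sⁱ`
against them gives the exponential moment.
-/

open MeasureTheory Filter Real Set
open scoped Nat

lemma Real.exp_sub_one_sub_eq_tsum (y : ℝ) :
    exp y - 1 - y = ∑' n : ℕ, y ^ (n + 2) / (n + 2)! := by
  rw [exp_eq_exp_ℝ, NormedSpace.exp_eq_tsum_div]
  beta_reduce
  rw [← (NormedSpace.expSeries_div_summable y).sum_add_tsum_nat_add 2]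
  simp only [Finset.sum_range_succ, Finset.range_one, Finset.sum_singleton, pow_zero,
    Nat.factorial_zero, Nat.cast_one, div_one, pow_one, Nat.factorial_one]
  ring

lemma Real.summable_pow_add_two_div_factorial (y : ℝ) :
    Summable fun n : ℕ => y ^ (n + 2) / (n + 2)! :=
  (NormedSpace.expSeries_div_summable y).comp_injective (add_left_injective 2)

lemma Real.exp_sub_one_sub_le_of_abs_le_s5 {y θ b : ℝ} (hθ0 : 0 ≤ θ) (hθ1 : θ ≤ 1) (hb : 0 ≤ b)
    (hy : |y| ≤ θ * b) : exp y - 1 - y ≤ θ ^ 2 * (exp b - 1 - b) := by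
  rw [exp_sub_one_sub_eq_tsum, exp_sub_one_sub_eq_tsum, ← tsum_mul_left]
  refine (summable_pow_add_two_div_factorial y).tsum_le_tsum (fun n => ?_)
    ((summable_pow_add_two_div_factorial b).mul_left _)
  rw [← mul_div_assoc]
  gcongr
  calc y ^ (n + 2) ≤ |y| ^ (n + 2) := (le_abs_self _).trans (abs_pow y _).le
    _ ≤ (θ * b) ^ (n + 2) := by gcongr
    _ = θ ^ 2 * θ ^ n * b ^ (n + 2) := by ring
    _ ≤ θ ^ 2 * 1 * b ^ (n + 2) := by gcongr; exact pow_le_one₀ hθ0 hθ1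
    _ = θ ^ 2 * b ^ (n + 2) := by ring

lemma contraction_rate_bounds {k ε lam η c : ℝ} (hk : 0 < k) (hε : 0 < ε) (hεk : ε ≤ k)
    (hlam : 0 < lam) (hc : c = (exp (lam * k) - 1 - lam * k) / lam ^ 2) (hη : 0 < η)
    (hηc : η < ε / (2 * c)) :
    1 + η ^ 2 * c - η * ε ≤ 1 - η * ε / 2 ∧ 0 < 1 - η * ε / 2 := by
  have hc_ge : k ^ 2 / 2 ≤ c := by
    rw [hc, le_div_iff₀ (by positivity)]
    nlinarith [quadratic_le_exp_of_nonneg (mul_nonneg hlam.le hk.le)]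
  have hc_pos : 0 < c := (by positivity : 0 < k ^ 2 / 2).trans_le hc_ge
  rw [lt_div_iff₀ (by positivity)] at hηc
  constructor
  · nlinarith
  · nlinarith [mul_le_mul_of_nonneg_left hεk (mul_pos hη hε).le]

section CondExp

variable {Ω : Type*} {m m0 : MeasurableSpace Ω} {μ : Measure Ω}

lemma ae_norm_exp_mul_le {Δ : Ω → ℝ} {k η : ℝ} (hη : 0 ≤ η) (hbdd : ∀ᵐ ω ∂μ, |Δ ω| ≤ k) :
    ∀ᵐ ω ∂μ, ‖exp (η * Δ ω)‖ ≤ exp (η * k) := by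
  filter_upwards [hbdd] with ω hω
  rw [norm_of_nonneg (exp_pos _).le, exp_le_exp]
  exact mul_le_mul_of_nonneg_left (abs_le.mp hω).2 hη

lemma condExp_exp_mul_le [IsFiniteMeasure μ] (hm : m ≤ m0) {Δ : Ω → ℝ}
    (hΔ : AEStronglyMeasurable Δ μ) {k lam η : ℝ} (hk : 0 ≤ k) (hη : 0 < η) (hηlam : η ≤ lam)
    (hbdd : ∀ᵐ ω ∂μ, |Δ ω| ≤ k) :
    μ[fun ω => exp (η * Δ ω) | m] ≤ᵐ[μ]
      fun ω => 1 + η ^ 2 * ((exp (lam * k) - 1 - lam * k) / lam ^ 2) + η * μ[Δ | m] ω := by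
  set a := 1 + η ^ 2 * ((exp (lam * k) - 1 - lam * k) / lam ^ 2)
  have hΔint : Integrable Δ μ := .of_bound hΔ k (by simpa using hbdd)
  have hexp_int : Integrable (fun ω => exp (η * Δ ω)) μ :=
    .of_bound (by fun_prop) _ (ae_norm_exp_mul_le hη.le hbdd)
  have hlam : 0 < lam := hη.trans_le hηlam
  have hexp_le : (fun ω => exp (η * Δ ω)) ≤ᵐ[μ] (fun _ => a) + η • Δ := by
    filter_upwards [hbdd] with ω hω
    have key := exp_sub_one_sub_le_of_abs_le_s5 (y := η * Δ ω) (div_nonneg hη.le hlam.le)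
      ((div_le_one hlam).mpr hηlam) (mul_nonneg hlam.le hk) (by
        rw [abs_mul, abs_of_pos hη, show η / lam * (lam * k) = η * k by field_simp]
        exact mul_le_mul_of_nonneg_left hω hη.le)
    simp only [Pi.add_apply, Pi.smul_apply, smul_eq_mul, a]
    rw [div_pow] at key
    field_simp at key ⊢
    linarith
  filter_upwards [condExp_mono hexp_int ((integrable_const a).add (hΔint.smul η)) hexp_le,
    condExp_add (integrable_const a) (hΔint.smul η) m, condExp_smul (m := m) η Δ]
    with ω h_mono h_add h_smul
  rw [h_add, Pi.add_apply, h_smul, condExp_const hm] at h_mono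
  exact h_mono

lemma integral_mul_le_of_condExp_le [IsFiniteMeasure μ] (hm : m ≤ m0) {G h : Ω → ℝ} {ρ : ℝ}
    (hG : StronglyMeasurable[m] G) (hG0 : 0 ≤ G) (hGint : Integrable G μ) (hh : Integrable h μ)
    (hGh : Integrable (G * h) μ) (hcond : ∀ᵐ ω ∂μ, G ω ≠ 0 → μ[h | m] ω ≤ ρ) :
    ∫ ω, G ω * h ω ∂μ ≤ ρ * ∫ ω, G ω ∂μ := by
  have hpull : μ[G * h | m] =ᵐ[μ] G * μ[h | m] :=
    condExp_mul_of_stronglyMeasurable_left hG hGh hh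
  calc ∫ ω, G ω * h ω ∂μ = ∫ ω, (G * μ[h | m]) ω ∂μ :=
        (integral_condExp hm).symm.trans (integral_congr_ae hpull)
    _ ≤ ∫ ω, ρ * G ω ∂μ := by
        refine integral_mono_ae (integrable_condExp.congr hpull) (hGint.const_mul ρ) ?_
        filter_upwards [hcond] with ω hω
        rcases eq_or_ne (G ω) 0 with hG0ω | hGω
        · simp [hG0ω]
        · rw [Pi.mul_apply, mul_comm]
          exact mul_le_mul_of_nonneg_right (hω hGω) (hG0 ω)
    _ = ρ * ∫ ω, G ω ∂μ := integral_const_mul ρ _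

end CondExp

section Drift

variable {Ω : Type*} {m0 : MeasurableSpace Ω} {μ : Measure Ω} {ℱ : Filtration ℕ m0}
  {X : ℕ → Ω → ℝ} {K η : ℝ} {m n : ℕ}

def staysAbove (X : ℕ → Ω → ℝ) (K : ℝ) (m n : ℕ) : Set Ω := {ω | ∀ i ≤ n, K < X (m + i) ω}

lemma staysAbove_succ_subset : staysAbove X K m (n + 1) ⊆ staysAbove X K m n :=
  fun _ hω i hi => hω i (hi.trans n.le_succ)

lemma measurableSet_staysAbove (hX : Adapted ℱ X) :
    MeasurableSet[ℱ (m + n)] (staysAbove X K m n) := by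
  have : staysAbove X K m n = ⋂ i ∈ Iic n, {ω | K < X (m + i) ω} := by
    ext ω; simp [staysAbove]
  rw [this]
  exact .biInter (to_countable _) fun i hi =>
    measurableSet_lt measurable_const ((hX (m + i)).mono (ℱ.mono (by simpa using hi)) le_rfl)

noncomputable def killedExp (X : ℕ → Ω → ℝ) (K η : ℝ) (m n : ℕ) : Ω → ℝ :=
  (staysAbove X K m n).indicator fun ω => exp (η * (X (m + n) ω - K))

lemma killedExp_nonneg (ω : Ω) : 0 ≤ killedExp X K η m n ω :=
  indicator_nonneg (fun _ _ => (exp_pos _).le) ω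

lemma stronglyMeasurable_killedExp (hX : Adapted ℱ X) :
    StronglyMeasurable[ℱ (m + n)] (killedExp X K η m n) :=
  (((hX (m + n)).sub_const K).const_mul η).exp.indicator (measurableSet_staysAbove hX)
    |>.stronglyMeasurable

lemma killedExp_le_exp (hη : 0 ≤ η) {ω : Ω} {B : ℝ} (hB : X (m + n) ω ≤ B) :
    killedExp X K η m n ω ≤ exp (η * (B - K)) := by
  unfold killedExp
  by_cases hω : ω ∈ staysAbove X K m n
  · rw [indicator_of_mem hω, exp_le_exp]
    exact mul_le_mul_of_nonneg_left (by linarith) hη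
  · rw [indicator_of_notMem hω]
    positivity

lemma indicator_one_le_killedExp (hη : 0 ≤ η) (ω : Ω) :
    (staysAbove X K m n).indicator 1 ω ≤ killedExp X K η m n ω := by
  unfold killedExp
  by_cases hω : ω ∈ staysAbove X K m n
  · rw [indicator_of_mem hω, indicator_of_mem hω, Pi.one_apply, one_le_exp_iff]
    exact mul_nonneg hη (by linarith [hω n le_rfl])
  · simp [indicator_of_notMem hω]

lemma killedExp_succ_le_mul (ω : Ω) :
    killedExp X K η m (n + 1) ω ≤
      killedExp X K η m n ω * exp (η * (X (m + n + 1) ω - X (m + n) ω)) := by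
  unfold killedExp
  by_cases hω : ω ∈ staysAbove X K m (n + 1)
  · rw [indicator_of_mem hω, indicator_of_mem (staysAbove_succ_subset hω), ← exp_add,
      ← add_assoc]
    exact le_of_eq (congrArg exp (by ring))
  · rw [indicator_of_notMem hω]
    exact mul_nonneg (killedExp_nonneg ω) (exp_pos _).le

lemma ae_le_add_mul_of_abs_sub_le {x0 k : ℝ} (hX0 : ∀ᵐ ω ∂μ, X 0 ω = x0)
    (hbdd : ∀ n, ∀ᵐ ω ∂μ, |X (n + 1) ω - X n ω| ≤ k) (n : ℕ) :
    ∀ᵐ ω ∂μ, X n ω ≤ x0 + n * k := by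
  induction n with
  | zero => filter_upwards [hX0] with ω h; simp [h]
  | succ n ih =>
    filter_upwards [ih, hbdd n] with ω hn hstep
    push_cast
    linarith [(abs_le.mp hstep).2]

lemma integrable_killedExp [IsFiniteMeasure μ] (hX : Adapted ℱ X) {x0 k : ℝ}
    (hX0 : ∀ᵐ ω ∂μ, X 0 ω = x0) (hbdd : ∀ n, ∀ᵐ ω ∂μ, |X (n + 1) ω - X n ω| ≤ k) (hη : 0 ≤ η) :
    Integrable (killedExp X K η m n) μ := by
  refine .of_bound ((stronglyMeasurable_killedExp hX).mono (ℱ.le _)).aestronglyMeasurable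
    (exp (η * (x0 + (m + n : ℕ) * k - K))) ?_
  filter_upwards [ae_le_add_mul_of_abs_sub_le hX0 hbdd (m + n)] with ω hω
  rw [norm_of_nonneg (killedExp_nonneg ω)]
  exact killedExp_le_exp hη hω

lemma integral_killedExp_succ_le [IsFiniteMeasure μ] (hX : Adapted ℱ X) {x0 k ε lam : ℝ}
    (hX0 : ∀ᵐ ω ∂μ, X 0 ω = x0) (hbdd : ∀ n, ∀ᵐ ω ∂μ, |X (n + 1) ω - X n ω| ≤ k)
    (hdrift : ∀ n, ∀ᵐ ω ∂μ, K ≤ X n ω → μ[fun ω' => X (n + 1) ω' - X n ω' | ℱ n] ω ≤ -ε)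
    (hk : 0 ≤ k) (hη : 0 < η) (hηlam : η ≤ lam) :
    ∫ ω, killedExp X K η m (n + 1) ω ∂μ ≤
      (1 + η ^ 2 * ((exp (lam * k) - 1 - lam * k) / lam ^ 2) - η * ε) *
        ∫ ω, killedExp X K η m n ω ∂μ := by
  have hΔ : AEStronglyMeasurable (fun ω => X (m + n + 1) ω - X (m + n) ω) μ :=
    (((hX (m + n + 1)).mono (ℱ.le _) le_rfl).sub
      ((hX (m + n)).mono (ℱ.le _) le_rfl)).aestronglyMeasurable
  have hexp_int : Integrable (fun ω => exp (η * (X (m + n + 1) ω - X (m + n) ω))) μ :=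
    .of_bound (by fun_prop) _ (ae_norm_exp_mul_le hη.le (hbdd (m + n)))
  have hint := integrable_killedExp (K := K) (m := m) (n := n) hX hX0 hbdd hη.le
  have hprod_int := hint.mul_bdd (by fun_prop) (ae_norm_exp_mul_le hη.le (hbdd (m + n)))
  have hcond : ∀ᵐ ω ∂μ, killedExp X K η m n ω ≠ 0 →
      μ[fun ω => exp (η * (X (m + n + 1) ω - X (m + n) ω)) | ℱ (m + n)] ω ≤
        1 + η ^ 2 * ((exp (lam * k) - 1 - lam * k) / lam ^ 2) - η * ε := by
    filter_upwards [condExp_exp_mul_le (ℱ.le (m + n)) hΔ hk hη hηlam (hbdd (m + n)),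
      hdrift (m + n)] with ω hexp hdriftω hω
    have hK : K ≤ X (m + n) ω := (mem_of_indicator_ne_zero hω n le_rfl).le
    nlinarith [hdriftω hK]
  calc ∫ ω, killedExp X K η m (n + 1) ω ∂μ
      ≤ ∫ ω, killedExp X K η m n ω * exp (η * (X (m + n + 1) ω - X (m + n) ω)) ∂μ :=
        integral_mono (integrable_killedExp hX hX0 hbdd hη.le) hprod_int killedExp_succ_le_mul
    _ ≤ _ := integral_mul_le_of_condExp_le (ℱ.le (m + n)) (stronglyMeasurable_killedExp hX)
        killedExp_nonneg hint hexp_int hprod_int hcond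

lemma integral_killedExp_le [IsProbabilityMeasure μ] (hX : Adapted ℱ X) {x0 k ε lam ρ : ℝ}
    (hX0 : ∀ᵐ ω ∂μ, X 0 ω = x0) (hbdd : ∀ n, ∀ᵐ ω ∂μ, |X (n + 1) ω - X n ω| ≤ k)
    (hdrift : ∀ n, ∀ᵐ ω ∂μ, K ≤ X n ω → μ[fun ω' => X (n + 1) ω' - X n ω' | ℱ n] ω ≤ -ε)
    (hk : 0 ≤ k) (hη : 0 < η) (hηlam : η ≤ lam) (hρ0 : 0 ≤ ρ)
    (hρ : 1 + η ^ 2 * ((exp (lam * k) - 1 - lam * k) / lam ^ 2) - η * ε ≤ ρ) (n : ℕ) :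
    ∫ ω, killedExp X K η m n ω ∂μ ≤ exp (η * (x0 + m * k - K)) * ρ ^ n := by
  induction n with
  | zero =>
    refine (integral_mono_ae (integrable_killedExp hX hX0 hbdd hη.le)
      (integrable_const (exp (η * (x0 + m * k - K)))) ?_).trans (by simp)
    filter_upwards [ae_le_add_mul_of_abs_sub_le hX0 hbdd m] with ω hω
    exact killedExp_le_exp hη.le hω
  | succ n ih =>
    have hint_nonneg : 0 ≤ ∫ ω, killedExp X K η m n ω ∂μ :=
      integral_nonneg killedExp_nonneg
    calc ∫ ω, killedExp X K η m (n + 1) ω ∂μ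
        ≤ (1 + η ^ 2 * ((exp (lam * k) - 1 - lam * k) / lam ^ 2) - η * ε) *
            ∫ ω, killedExp X K η m n ω ∂μ :=
          integral_killedExp_succ_le hX hX0 hbdd hdrift hk hη hηlam
      _ ≤ ρ * (exp (η * (x0 + m * k - K)) * ρ ^ n) :=
          mul_le_mul hρ ih hint_nonneg hρ0
      _ = exp (η * (x0 + m * k - K)) * ρ ^ (n + 1) := by ring

lemma measure_staysAbove_le [IsProbabilityMeasure μ] (hX : Adapted ℱ X) {x0 k ε lam ρ : ℝ}
    (hX0 : ∀ᵐ ω ∂μ, X 0 ω = x0) (hbdd : ∀ n, ∀ᵐ ω ∂μ, |X (n + 1) ω - X n ω| ≤ k)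
    (hdrift : ∀ n, ∀ᵐ ω ∂μ, K ≤ X n ω → μ[fun ω' => X (n + 1) ω' - X n ω' | ℱ n] ω ≤ -ε)
    (hk : 0 ≤ k) (hη : 0 < η) (hηlam : η ≤ lam) (hρ0 : 0 ≤ ρ)
    (hρ : 1 + η ^ 2 * ((exp (lam * k) - 1 - lam * k) / lam ^ 2) - η * ε ≤ ρ) (n : ℕ) :
    μ (staysAbove X K m n) ≤ ENNReal.ofReal (exp (η * (x0 + m * k - K)) * ρ ^ n) := by
  have hA : MeasurableSet (staysAbove X K m n) := ℱ.le _ _ (measurableSet_staysAbove hX)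
  rw [← ofReal_measureReal, ← integral_indicator_one hA]
  refine ENNReal.ofReal_le_ofReal ((integral_mono ((integrable_const 1).indicator hA)
    (integrable_killedExp hX hX0 hbdd hη.le) (indicator_one_le_killedExp hη.le)).trans ?_)
  exact integral_killedExp_le hX hX0 hbdd hdrift hk hη hηlam hρ0 hρ n

lemma setOf_natCast_lt_eq_staysAbove {τ : Ω → ℕ∞}
    (hτ : ∀ ω, τ ω = sInf ((fun n : ℕ => (n : ℕ∞)) '' {n : ℕ | X (m + n) ω ≤ K})) (n : ℕ) :
    {ω | (n : ℕ∞) < τ ω} = staysAbove X K m n := by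
  ext ω
  rw [mem_ofPred_eq, hτ, ← ENat.add_one_le_iff (ENat.natCast_ne_top n), le_sInf_iff,
    forall_mem_image]
  simp only [staysAbove, mem_ofPred_eq]
  refine forall_congr' fun i => ?_
  norm_cast
  constructor
  · intro h hi
    by_contra hK
    exact absurd (h (not_lt.mp hK)) (by omega)
  · intro h hK
    by_contra hi
    exact absurd (h (by omega)) (not_lt.mpr hK)

end Drift

section RandomTime

variable {Ω : Type*} {m0 : MeasurableSpace Ω} {μ : Measure Ω} {T : Ω → ℕ∞}

lemma measurable_of_measurableSet_natCast_lt
    (hT : ∀ n : ℕ, MeasurableSet {ω | (n : ℕ∞) < T ω}) : Measurable T := by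
  refine measurable_to_countable' fun x => ?_
  induction x using ENat.recTopCoe with
  | top =>
    convert MeasurableSet.iInter hT using 1
    ext ω
    simp only [mem_preimage, mem_singleton_iff, mem_iInter, mem_ofPred_eq]
    exact ENat.eq_top_iff_forall_gt
  | coe n =>
    convert (hT n).compl.inter (MeasurableSet.biInter (to_countable (Iio n)) fun j _ => hT j)
      using 1
    ext ω
    simp only [mem_preimage, mem_singleton_iff, mem_inter_iff, mem_compl_iff, mem_ofPred_eq,
      not_lt, mem_iInter, mem_Iio]
    induction T ω using ENat.recTopCoe with
    | top => simp
    | coe t =>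
      norm_cast
      refine ⟨by rintro rfl; exact ⟨le_rfl, fun _ h => h⟩, fun ⟨hle, hlt⟩ => ?_⟩
      exact le_antisymm hle (not_lt.mp fun h => (hlt t h).false)

lemma ae_ne_top_of_measure_lt_le_geometric {C ρ : ℝ} (hρ0 : 0 ≤ ρ) (hρ1 : ρ < 1)
    (hT : ∀ n : ℕ, μ {ω | (n : ℕ∞) < T ω} ≤ ENNReal.ofReal (C * ρ ^ n)) :
    ∀ᵐ ω ∂μ, T ω ≠ ⊤ := by
  have hlim : Tendsto (fun n : ℕ => ENNReal.ofReal (C * ρ ^ n)) atTop (nhds 0) := by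
    simpa using ENNReal.tendsto_ofReal
      ((tendsto_pow_atTop_nhds_zero_of_lt_one hρ0 hρ1).const_mul C)
  rw [ae_iff]
  refine le_antisymm (ge_of_tendsto' hlim fun n => (measure_mono ?_).trans (hT n)) bot_le
  intro ω hω
  simp only [ne_eq, not_not, mem_ofPred_eq] at hω ⊢
  exact hω ▸ ENat.natCast_lt_top n

-- Only an inequality: at `t = ⊤` the left side is `1`, as `⊤.toNat = 0`.
lemma ENat.ofReal_pow_toNat_le_tsum {s : ℝ} (hs : 1 ≤ s) (t : ℕ∞) :
    ENNReal.ofReal (s ^ t.toNat) ≤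
      1 + ENNReal.ofReal (s - 1) *
        ∑' i : ℕ, if (i : ℕ∞) < t then ENNReal.ofReal (s ^ i) else 0 := by
  induction t using ENat.recTopCoe with
  | top => simp
  | coe t =>
    have hgeom : s ^ t = 1 + (s - 1) * ∑ i ∈ Finset.range t, s ^ i := by
      rw [mul_comm, geom_sum_mul]; ring
    have hsum : ∑ i ∈ Finset.range t, ENNReal.ofReal (s ^ i) ≤
        ∑' i : ℕ, if (i : ℕ∞) < t then ENNReal.ofReal (s ^ i) else 0 := by
      refine le_of_eq_of_le (Finset.sum_congr rfl fun i hi => ?_) (ENNReal.sum_le_tsum _)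
      rw [if_pos (by exact_mod_cast Finset.mem_range.mp hi)]
    rw [ENat.toNat_natCast, hgeom, ENNReal.ofReal_add zero_le_one (by positivity),
      ENNReal.ofReal_one, ENNReal.ofReal_mul (by linarith),
      ENNReal.ofReal_sum_of_nonneg fun i _ => by positivity]
    gcongr

variable [IsProbabilityMeasure μ]

lemma lintegral_ofReal_pow_toNat_le (hT : ∀ n : ℕ, MeasurableSet {ω | (n : ℕ∞) < T ω}) {s : ℝ}
    (hs : 1 ≤ s) :
    ∫⁻ ω, ENNReal.ofReal (s ^ (T ω).toNat) ∂μ ≤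
      1 + ENNReal.ofReal (s - 1) * ∑' i : ℕ, ENNReal.ofReal (s ^ i) * μ {ω | (i : ℕ∞) < T ω} := by
  calc ∫⁻ ω, ENNReal.ofReal (s ^ (T ω).toNat) ∂μ
      ≤ ∫⁻ ω, 1 + ENNReal.ofReal (s - 1) *
          ∑' i : ℕ, {ω | (i : ℕ∞) < T ω}.indicator (fun _ => ENNReal.ofReal (s ^ i)) ω ∂μ := by
        refine lintegral_mono fun ω => ?_
        simpa only [indicator_apply, mem_ofPred_eq] using ENat.ofReal_pow_toNat_le_tsum hs (T ω)
    _ = 1 + ENNReal.ofReal (s - 1) *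
          ∑' i : ℕ, ENNReal.ofReal (s ^ i) * μ {ω | (i : ℕ∞) < T ω} := by
        rw [lintegral_add_left measurable_const, lintegral_const_mul _
          (.tsum fun i => measurable_const.indicator (hT i)),
          lintegral_tsum fun i => (measurable_const.indicator (hT i)).aemeasurable]
        simp only [lintegral_const, measure_univ, mul_one, lintegral_indicator_const (hT _)]

lemma integrable_and_integral_pow_toNat_le (hT : ∀ n : ℕ, MeasurableSet {ω | (n : ℕ∞) < T ω})
    {C ρ s : ℝ} (hC : 0 ≤ C) (hρ : 0 ≤ ρ) (hs : 1 ≤ s) (hρs : ρ * s < 1)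
    (htail : ∀ n : ℕ, μ {ω | (n : ℕ∞) < T ω} ≤ ENNReal.ofReal (C * ρ ^ n)) :
    Integrable (fun ω => s ^ (T ω).toNat) μ ∧
      ∫ ω, s ^ (T ω).toNat ∂μ ≤ C * ((s - 1) / (1 - ρ * s)) + 1 := by
  have hterm : 0 ≤ C * ((s - 1) / (1 - ρ * s)) :=
    mul_nonneg hC (div_nonneg (by linarith) (by linarith))
  have hseries : ∑' i : ℕ, ENNReal.ofReal (s ^ i) * μ {ω | (i : ℕ∞) < T ω} ≤
      ENNReal.ofReal (C / (1 - ρ * s)) :=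
    calc ∑' i : ℕ, ENNReal.ofReal (s ^ i) * μ {ω | (i : ℕ∞) < T ω}
        ≤ ∑' i : ℕ, ENNReal.ofReal (C * (ρ * s) ^ i) := by
          refine ENNReal.tsum_le_tsum fun i => (mul_le_mul_right (htail i) _).trans_eq ?_
          rw [← ENNReal.ofReal_mul (by positivity)]
          ring_nf
      _ = ENNReal.ofReal (C / (1 - ρ * s)) := by
          rw [← ENNReal.ofReal_tsum_of_nonneg (fun i => by positivity)
            ((summable_geometric_of_lt_one (by positivity) hρs).mul_left C),
            tsum_mul_left, tsum_geometric_of_lt_one (by positivity) hρs, div_eq_mul_inv]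
  have hlint : ∫⁻ ω, ENNReal.ofReal (s ^ (T ω).toNat) ∂μ ≤
      ENNReal.ofReal (C * ((s - 1) / (1 - ρ * s)) + 1) := by
    refine (lintegral_ofReal_pow_toNat_le hT hs).trans ?_
    rw [ENNReal.ofReal_add hterm zero_le_one, ENNReal.ofReal_one, add_comm,
      mul_div_left_comm, ENNReal.ofReal_mul (by linarith)]
    gcongr
  have hmeas : AEStronglyMeasurable (fun ω => s ^ (T ω).toNat) μ :=
    ((Measurable.of_discrete (f := fun t : ℕ∞ => s ^ t.toNat)).comp
      (measurable_of_measurableSet_natCast_lt hT)).aestronglyMeasurable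
  have hnonneg : 0 ≤ᵐ[μ] fun ω => s ^ (T ω).toNat :=
    Eventually.of_forall fun ω => by positivity
  refine ⟨⟨hmeas, ?_⟩, ?_⟩
  · rw [hasFiniteIntegral_iff_ofReal hnonneg]
    exact hlint.trans_lt ENNReal.ofReal_lt_top
  · rw [integral_eq_lintegral_of_nonneg_ae hnonneg hmeas]
    exact ENNReal.toReal_le_of_le_ofReal (by linarith) hlint

end RandomTime

theorem stmt_5_general
    {Ω : Type*} {m0 : MeasurableSpace Ω} {μ : Measure Ω} [IsProbabilityMeasure μ]
    (ℱ : Filtration ℕ m0) (X : ℕ → Ω → ℝ) (hadp : Adapted ℱ X)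
    (x0 : ℝ) (hX0 : ∀ᵐ ω ∂μ, X 0 ω = x0)
    (k ε K : ℝ) (hk : 0 < k) (hε0 : 0 < ε) (hεk : ε ≤ k)
    (hbdd : ∀ n : ℕ, ∀ᵐ ω ∂μ, |X (n + 1) ω - X n ω| ≤ k)
    (hdrift : ∀ n : ℕ, ∀ᵐ ω ∂μ, K ≤ X n ω →
      (μ[(fun ω' => X (n + 1) ω' - X n ω') | ℱ n]) ω ≤ -ε)
    (lam : ℝ) (hlam : 0 < lam)
    (c η ρ : ℝ)
    (hc : c = (Real.exp (lam * k) - 1 - lam * k) / lam ^ 2)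
    (hη0 : 0 < η) (hηlt : η < min lam (ε / (2 * c)))
    (hρ : ρ = 1 - η * ε / 2)
    (τ : ℕ → Ω → ℕ∞)
    (hτ : ∀ m ω, τ m ω = sInf ((fun n : ℕ => (n : ℕ∞)) '' {n : ℕ | X (m + n) ω ≤ K})) :
    ∀ m : ℕ,
      (∀ᵐ ω ∂μ, τ m ω ≠ ⊤) ∧
      (∀ s : ℝ, 1 < s → s < ρ⁻¹ →
        Integrable (fun ω => s ^ (τ m ω).toNat) μ ∧
        ∫ ω, s ^ (τ m ω).toNat ∂μ ≤
          Real.exp (η * (x0 + m * k - K)) * ((s - 1) / (1 - ρ * s)) + 1) := by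
  obtain ⟨hηlam, hηc⟩ := lt_min_iff.mp hηlt
  obtain ⟨hcontract, hρ0⟩ := contraction_rate_bounds hk hε0 hεk hlam hc hη0 hηc
  rw [← hρ] at hcontract hρ0
  have hρ1 : ρ < 1 := by nlinarith
  subst hc
  intro m
  have hmeas (n : ℕ) : MeasurableSet {ω | (n : ℕ∞) < τ m ω} := by
    rw [setOf_natCast_lt_eq_staysAbove (hτ m)]
    exact ℱ.le _ _ (measurableSet_staysAbove hadp)
  have htail (n : ℕ) :
      μ {ω | (n : ℕ∞) < τ m ω} ≤ ENNReal.ofReal (exp (η * (x0 + m * k - K)) * ρ ^ n) := by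
    rw [setOf_natCast_lt_eq_staysAbove (hτ m)]
    exact measure_staysAbove_le hadp hX0 hbdd hdrift hk.le hη0 hηlam.le hρ0.le hcontract n
  refine ⟨ae_ne_top_of_measure_lt_le_geometric hρ0.le hρ1 htail, fun s hs1 hs2 => ?_⟩
  rw [← one_div, lt_div_iff₀' hρ0] at hs2
  exact integrable_and_integral_pow_toNat_le hmeas (exp_pos _).le hρ0.le hs1.le hs2 htail

theorem stmt_5
    {Ω : Type*} {m0 : MeasurableSpace Ω} {μ : Measure Ω} [IsProbabilityMeasure μ]
    (ℱ : Filtration ℕ m0) (X : ℕ → Ω → ℝ) (hadp : Adapted ℱ X)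
    (x0 : ℝ) (hX0 : ∀ᵐ ω ∂μ, X 0 ω = x0)
    (k ε K : ℝ) (hk : 0 < k) (hε0 : 0 < ε) (hεk : ε ≤ k)
    (hbdd : ∀ n : ℕ, ∀ᵐ ω ∂μ, |X (n + 1) ω - X n ω| ≤ k)
    (hdrift : ∀ n : ℕ, ∀ᵐ ω ∂μ, K ≤ X n ω →
      (μ[(fun ω' => X (n + 1) ω' - X n ω') | ℱ n]) ω ≤ -ε)
    (lam : ℝ) (hlam : 0 < lam)
    (c η ρ D : ℝ)
    (hc : c = (Real.exp (lam * k) - 1 - lam * k) / lam ^ 2)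
    (hη0 : 0 < η) (hηlt : η < min lam (ε / (2 * c)))
    (hρ : ρ = 1 - η * ε / 2)
    (hD : D = Real.exp (lam * k))
    (τ : ℕ → Ω → ℕ∞)
    (hτ : ∀ m ω, τ m ω = sInf ((fun n : ℕ => (n : ℕ∞)) '' {n : ℕ | X (m + n) ω ≤ K})) :
    ∀ m : ℕ,
      (∀ᵐ ω ∂μ, τ m ω ≠ ⊤) ∧
      (∀ s : ℝ, 1 < s → s < ρ⁻¹ →
        Integrable (fun ω => s ^ (τ m ω).toNat) μ ∧
        ∫ ω, s ^ (τ m ω).toNat ∂μ ≤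
          Real.exp (η * (x0 + m * k - K)) * ((s - 1) / (1 - ρ * s)) + 1) :=
  stmt_5_general ℱ X hadp x0 hX0 k ε K hk hε0 hεk hbdd hdrift lam hlam c η ρ hc hη0 hηlt hρ τ hτ
end
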